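/- arXiv:math/0210110 — 5 statements merged into one kernel-verified Lean document; each statement's English description precedes it below -/
import Mathlib

section
/- Let k be a field, R = k[x_1,…,x_n], and let Δ be a simplicial complex on the vertex set {x_1,…,x_n} with facet ideal I = F(Δ). An ideal p = (x_{i_1},…,x_{i_s}) generated by a subset of the variables is a minimal prime of I if and only if {x_{i_1},…,x_{i_s}} is a minimal vertex cover of Δ. -/
open MvPolynomial

/-- `Δ` is the facet set of a simplicial complex: facets are nonempty and
none of them contains another. -/
def IsFacetFamily {V : Type*} [DecidableEq V] (Δ : Finset (Finset V)) : Prop :=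
  (∀ F ∈ Δ, F.Nonempty) ∧ ∀ F ∈ Δ, ∀ G ∈ Δ, F ⊆ G → F = G

/-- `A` is a vertex cover of the simplicial complex with facet set `Δ`. -/
def IsVertexCover {V : Type*} [DecidableEq V] (Δ : Finset (Finset V)) (A : Finset V) : Prop :=
  ∀ F ∈ Δ, ∃ v ∈ A, v ∈ F

/-- `A` is a minimal vertex cover of the simplicial complex with facet set `Δ`. -/
def IsMinimalVertexCover {V : Type*} [DecidableEq V] (Δ : Finset (Finset V))
    (A : Finset V) : Prop :=
  IsVertexCover Δ A ∧ ∀ B ⊆ A, IsVertexCover Δ B → B = A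

/-- The facet ideal of the simplicial complex with facet set `Δ`, generated by the
squarefree monomials corresponding to the facets. -/
noncomputable def facetIdeal (k : Type*) [Field k] {n : ℕ} (Δ : Finset (Finset (Fin n))) :
    Ideal (MvPolynomial (Fin n) k) :=
  Ideal.span ((fun F : Finset (Fin n) => ∏ i ∈ F, X i) '' ↑Δ)

/-!
A prime `Q` contains the squarefree monomial of a facet iff it contains one of its variables,
so `F(Δ) ≤ (x_i : i ∈ A)` says exactly that `A` is a vertex cover. The ideals `(x_i : i ∈ A)`
are prime (kernels of the substitutions `x_i ↦ 0` for `i ∈ A`) and ordered like the sets `A`.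
Finally, a prime `Q` with `F(Δ) ≤ Q ≤ (x_i : i ∈ A)` contains `(x_i : i ∈ B)` for the cover
`B = {i ∈ A | x_i ∈ Q}`, so minimality of the cover `A` forces `Q = (x_i : i ∈ A)`.
-/

namespace MvPolynomial

variable {σ R : Type*}

theorem sub_aeval_mem_span_X_sub [CommRing R] (f : σ → MvPolynomial σ R)
    (p : MvPolynomial σ R) : p - aeval f p ∈ Ideal.span (Set.range fun i => X i - f i) := by
  induction p using MvPolynomial.induction_on with
  | C a => simp
  | add p q hp hq => simpa only [map_add, add_sub_add_comm] using Ideal.add_mem _ hp hq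
  | mul_X p i hp =>
    rw [map_mul, aeval_X,
      show p * X i - aeval f p * f i = (p - aeval f p) * X i + aeval f p * (X i - f i) by ring]
    exact Ideal.add_mem _ (Ideal.mul_mem_right _ _ hp)
      (Ideal.mul_mem_left _ _ (Ideal.subset_span ⟨i, rfl⟩))

open Classical in
theorem span_X_image_eq_ker_aeval [CommRing R] (s : Set σ) :
    Ideal.span (X '' s : Set (MvPolynomial σ R)) =
      RingHom.ker (aeval fun i => if i ∈ s then 0 else X i :
        MvPolynomial σ R →ₐ[R] MvPolynomial σ R) := by
  refine le_antisymm ?_ fun p hp => ?_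
  · rw [Ideal.span_le]
    rintro _ ⟨i, hi, rfl⟩
    simp [RingHom.mem_ker, hi]
  · have hle : Ideal.span (Set.range fun i => X i - if i ∈ s then 0 else X i) ≤
        Ideal.span (X '' s : Set (MvPolynomial σ R)) := by
      rw [Ideal.span_le]
      rintro _ ⟨i, rfl⟩
      by_cases hi : i ∈ s
      · simpa [hi] using (Ideal.subset_span (Set.mem_image_of_mem X hi) :
          X i ∈ Ideal.span (X '' s : Set (MvPolynomial σ R)))
      · simp [hi]
    simpa only [(RingHom.mem_ker).1 hp, sub_zero] using hle (sub_aeval_mem_span_X_sub _ p)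

theorem isPrime_span_X_image [CommRing R] [IsDomain R] (s : Set σ) :
    (Ideal.span (X '' s : Set (MvPolynomial σ R))).IsPrime := by
  classical
  rw [span_X_image_eq_ker_aeval]
  exact RingHom.ker_isPrime _

theorem X_mem_span_X_image_iff [CommSemiring R] [Nontrivial R] {s : Set σ} {i : σ} :
    (X i : MvPolynomial σ R) ∈ Ideal.span (X '' s) ↔ i ∈ s := by
  refine ⟨fun h => ?_, fun h => Ideal.subset_span ⟨i, h, rfl⟩⟩
  obtain ⟨j, hj, hji⟩ := mem_ideal_span_X_image.1 h (Finsupp.single i 1) (by simp [support_X])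
  obtain ⟨rfl, -⟩ := Finsupp.single_apply_ne_zero.1 hji
  exact hj

theorem span_X_image_le_span_X_image_iff [CommSemiring R] [Nontrivial R] {s t : Set σ} :
    Ideal.span (X '' s : Set (MvPolynomial σ R)) ≤ Ideal.span (X '' t) ↔ s ⊆ t :=
  ⟨fun h i hi => X_mem_span_X_image_iff.1 (h (Ideal.subset_span ⟨i, hi, rfl⟩)),
    fun h => Ideal.span_mono (Set.image_mono h)⟩

end MvPolynomial

section FacetIdeal

variable {k : Type*} [Field k] {n : ℕ} {Δ : Finset (Finset (Fin n))}

theorem facetIdeal_le_iff_of_isPrime {Q : Ideal (MvPolynomial (Fin n) k)} [Q.IsPrime] :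
    facetIdeal k Δ ≤ Q ↔ ∀ F ∈ Δ, ∃ i ∈ F, (X i : MvPolynomial (Fin n) k) ∈ Q := by
  simp only [facetIdeal, Ideal.span_le, Set.image_subset_iff]
  exact forall₂_congr fun F _ => Ideal.IsPrime.prod_mem_iff

theorem facetIdeal_le_span_X_image_iff (A : Finset (Fin n)) :
    facetIdeal k Δ ≤ Ideal.span (X '' ↑A) ↔ IsVertexCover Δ A := by
  have := isPrime_span_X_image (R := k) (A : Set (Fin n))
  simp only [facetIdeal_le_iff_of_isPrime, X_mem_span_X_image_iff, Finset.mem_coe]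
  exact forall₂_congr fun F _ => by simp only [and_comm]

open Classical in
theorem isVertexCover_filter_X_mem {Q : Ideal (MvPolynomial (Fin n) k)} [Q.IsPrime]
    {A : Finset (Fin n)} (hΔQ : facetIdeal k Δ ≤ Q) (hQA : Q ≤ Ideal.span (X '' ↑A)) :
    IsVertexCover Δ {i ∈ A | (X i : MvPolynomial (Fin n) k) ∈ Q} := by
  intro F hF
  obtain ⟨i, hiF, hiQ⟩ := facetIdeal_le_iff_of_isPrime.1 hΔQ F hF
  exact ⟨i, Finset.mem_filter.2 ⟨X_mem_span_X_image_iff.1 (hQA hiQ), hiQ⟩, hiF⟩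

end FacetIdeal

theorem span_mem_minimalPrimes_facetIdeal_iff_general
    (k : Type*) [Field k] {n : ℕ} (Δ : Finset (Finset (Fin n)))
    (A : Finset (Fin n)) :
    Ideal.span ((X : Fin n → MvPolynomial (Fin n) k) '' ↑A) ∈
        (facetIdeal k Δ).minimalPrimes ↔
      IsMinimalVertexCover Δ A := by
  classical
  constructor
  · rintro ⟨⟨-, hΔA⟩, hmin⟩
    refine ⟨(facetIdeal_le_span_X_image_iff A).1 hΔA, fun B hBA hB => hBA.antisymm ?_⟩
    have hAB := hmin ⟨isPrime_span_X_image _, (facetIdeal_le_span_X_image_iff B).2 hB⟩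
      (span_X_image_le_span_X_image_iff.2 (Finset.coe_subset.2 hBA))
    exact Finset.coe_subset.1 (span_X_image_le_span_X_image_iff.1 hAB)
  · rintro ⟨hA, hmin⟩
    refine ⟨⟨isPrime_span_X_image _, (facetIdeal_le_span_X_image_iff A).2 hA⟩,
      fun Q ⟨hQ, hΔQ⟩ hQA => ?_⟩
    have hfilter := hmin _ (Finset.filter_subset _ A) (isVertexCover_filter_X_mem hΔQ hQA)
    rw [Ideal.span_le]
    rintro _ ⟨i, hi, rfl⟩
    rw [Finset.mem_coe, ← hfilter] at hi
    exact (Finset.mem_filter.1 hi).2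

/-- An ideal generated by a subset of the variables is a minimal prime of the
facet ideal `F(Δ)` iff the corresponding set of vertices is a minimal vertex
cover of `Δ`. -/
theorem span_mem_minimalPrimes_facetIdeal_iff
    (k : Type*) [Field k] {n : ℕ} (Δ : Finset (Finset (Fin n)))
    (hΔ : IsFacetFamily Δ) (A : Finset (Fin n)) :
    Ideal.span ((X : Fin n → MvPolynomial (Fin n) k) '' ↑A) ∈
        (facetIdeal k Δ).minimalPrimes ↔
      IsMinimalVertexCover Δ A :=
  span_mem_minimalPrimes_facetIdeal_iff_general k Δ A
end

section
/- Let Δ be a simplicial complex on the vertex set {x_1,…,x_n} with facet ideal I = F(Δ) ⊆ R = k[x_1,…,x_n]. Then I is the intersection of the prime ideals (x : x ∈ A), where A ranges over all minimal vertex covers of Δ. -/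
/-! Both sides are monomial ideals, so it suffices to compare the monomials `x^m` they contain.
`x^m` lies in the facet ideal iff the support of `m` contains a facet, and in the prime
generated by a cover `A` iff the support meets `A`. A set of vertices contains a facet iff it meets
every minimal vertex cover: otherwise the vertices outside it form a cover. -/

open MvPolynomial

/-- The vertex covering number: the smallest cardinality of a vertex cover. -/
noncomputable def coveringNumber {V : Type*} [DecidableEq V] (Δ : Finset (Finset V)) : ℕ :=
  sInf {c : ℕ | ∃ A : Finset V, IsVertexCover Δ A ∧ A.card = c}

/-- The height of a prime ideal, as the height of the corresponding point of the
prime spectrum ordered by inclusion. -/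
noncomputable def primeHeight {R : Type*} [CommRing R] (p : PrimeSpectrum R) : ℕ∞ :=
  Order.height p

/-- The height of an ideal: the infimum of the heights of the primes containing it. -/
noncomputable def idealHeight {R : Type*} [CommRing R] (I : Ideal R) : ℕ∞ :=
  ⨅ p ∈ {p : PrimeSpectrum R | I ≤ p.asIdeal}, primeHeight p


section VertexCover

variable {V : Type*} [DecidableEq V] {Δ : Finset (Finset V)}

theorem IsVertexCover.exists_subset_isMinimalVertexCover {A : Finset V}
    (hA : IsVertexCover Δ A) : ∃ B ⊆ A, IsMinimalVertexCover Δ B := by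
  obtain ⟨B, hBA, hB⟩ := exists_minimal_le_of_wellFoundedLT (IsVertexCover Δ) A hA
  exact ⟨B, hBA, hB.prop, fun C hCB hC => le_antisymm hCB (hB.le_of_le hC hCB)⟩

theorem exists_facet_subset_iff_forall_isMinimalVertexCover {S : Finset V} :
    (∃ F ∈ Δ, F ⊆ S) ↔ ∀ A, IsMinimalVertexCover Δ A → ∃ v ∈ A, v ∈ S := by
  constructor
  · rintro ⟨F, hF, hFS⟩ A hA
    obtain ⟨v, hvA, hvF⟩ := hA.1 F hF
    exact ⟨v, hvA, hFS hvF⟩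
  · intro h
    by_contra! hS
    have hcover : IsVertexCover Δ (Δ.biUnion id \ S) := fun F hF => by
      obtain ⟨v, hvF, hvS⟩ := Finset.not_subset.1 (hS F hF)
      exact ⟨v, Finset.mem_sdiff.2 ⟨Finset.mem_biUnion.2 ⟨F, hF, hvF⟩, hvS⟩, hvF⟩
    obtain ⟨A, hAS, hA⟩ := hcover.exists_subset_isMinimalVertexCover
    obtain ⟨v, hvA, hvS⟩ := h A hA
    exact (Finset.mem_sdiff.1 (hAS hvA)).2 hvS

end VertexCover

namespace MvPolynomial

variable {σ R : Type*} [CommSemiring R]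

theorem prod_X_eq_monomial_sum_single (F : Finset σ) :
    ∏ i ∈ F, (X i : MvPolynomial σ R) = monomial (∑ i ∈ F, Finsupp.single i 1) 1 :=
  (monomial_sum_one F _).symm

end MvPolynomial

theorem Finset.sum_single_one_le_iff {σ : Type*} {F : Finset σ} {m : σ →₀ ℕ} :
    ∑ i ∈ F, Finsupp.single i 1 ≤ m ↔ F ⊆ m.support := by
  classical
  simp only [Finsupp.le_def, Finsupp.coe_finsetSum, Finset.sum_apply, Finsupp.single_apply,
    Finset.sum_ite_eq', Finset.subset_iff, Finsupp.mem_support_iff]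
  refine forall_congr' fun i => ?_
  split_ifs with hi <;> simp [hi, Nat.one_le_iff_ne_zero]

theorem mem_facetIdeal_iff {k : Type*} [Field k] {n : ℕ} {Δ : Finset (Finset (Fin n))}
    {f : MvPolynomial (Fin n) k} :
    f ∈ facetIdeal k Δ ↔ ∀ m ∈ f.support, ∃ F ∈ Δ, F ⊆ m.support := by
  have facetIdeal_eq_span_monomial : facetIdeal k Δ =
      Ideal.span ((fun s => monomial s (1 : k)) ''
        ((fun F : Finset (Fin n) => ∑ i ∈ F, Finsupp.single i 1) '' ↑Δ)) := by
    simp only [facetIdeal, Set.image_image, prod_X_eq_monomial_sum_single]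
  simp only [facetIdeal_eq_span_monomial, mem_ideal_span_monomial_image, Set.exists_mem_image,
    Finset.mem_coe, Finset.sum_single_one_le_iff]

theorem facetIdeal_eq_inf_minimalVertexCovers_general (k : Type*) [Field k] {n : ℕ}
    (Δ : Finset (Finset (Fin n))) :
    facetIdeal k Δ =
      ⨅ (A : Finset (Fin n)) (_ : IsMinimalVertexCover Δ A),
        Ideal.span ((X : Fin n → MvPolynomial (Fin n) k) '' ↑A) := by
  ext f
  simp only [mem_facetIdeal_iff, Ideal.mem_iInf, mem_ideal_span_X_image, Finset.mem_coe,
    exists_facet_subset_iff_forall_isMinimalVertexCover, Finsupp.mem_support_iff]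
  exact ⟨fun h A hA m hm => h m hm A hA, fun h m hm A hA => h A hA m hm⟩

/-- The facet ideal is the intersection of the prime ideals generated by the minimal
vertex covers of `Δ`. -/
theorem facetIdeal_eq_inf_minimalVertexCovers (k : Type*) [Field k] {n : ℕ}
    (Δ : Finset (Finset (Fin n))) (hΔ : IsFacetFamily Δ) :
    facetIdeal k Δ =
      ⨅ (A : Finset (Fin n)) (_ : IsMinimalVertexCover Δ A),
        Ideal.span ((X : Fin n → MvPolynomial (Fin n) k) '' ↑A) :=
  facetIdeal_eq_inf_minimalVertexCovers_general k Δ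
end

section
/- Let Δ be a simplicial complex with at least two facets. If F is a leaf of Δ, then F has a vertex that belongs to no other facet of Δ. -/
/-- A facet `F` of the simplicial complex with facet set `Δ` is a leaf if either it is
the only facet, or there is a facet `G ≠ F` with `F ∩ F' ⊆ F ∩ G` for every facet
`F' ≠ F`. -/
def IsLeaf {V : Type*} [DecidableEq V] (Δ : Finset (Finset V)) (F : Finset V) : Prop :=
  F ∈ Δ ∧ (Δ = {F} ∨ ∃ G ∈ Δ, G ≠ F ∧ ∀ F' ∈ Δ, F' ≠ F → F ∩ F' ⊆ F ∩ G)

/-- The simplicial complex with facet set `Δ` is connected: any two facets are joined by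
a chain of facets in which consecutive facets intersect. -/
def IsConnectedComplex {V : Type*} [DecidableEq V] (Δ : Finset (Finset V)) : Prop :=
  ∀ F ∈ Δ, ∀ G ∈ Δ,
    Relation.ReflTransGen (fun A B : Finset V => A ∈ Δ ∧ B ∈ Δ ∧ (A ∩ B).Nonempty) F G

/-- A forest: every nonempty subcomplex (i.e. nonempty subset of the facet set)
has a leaf. -/
def IsForest {V : Type*} [DecidableEq V] (Δ : Finset (Finset V)) : Prop :=
  ∀ Γ ⊆ Δ, Γ.Nonempty → ∃ F, IsLeaf Γ F

/-- A tree: a connected simplicial complex every nonempty subcomplex of which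
has a leaf. -/
def IsTree {V : Type*} [DecidableEq V] (Δ : Finset (Finset V)) : Prop :=
  IsConnectedComplex Δ ∧ IsForest Δ

/-- A leaf of a simplicial complex with at least two facets has a vertex belonging to no
other facet. -/
theorem leaf_has_free_vertex {V : Type*} [DecidableEq V] (Δ : Finset (Finset V))
    (hΔ : IsFacetFamily Δ) (h2 : 2 ≤ Δ.card) (F : Finset V) (hF : IsLeaf Δ F) :
    ∃ v ∈ F, ∀ G ∈ Δ, G ≠ F → v ∉ G := by
  obtain ⟨hFΔ, hcase⟩ := hF
  rcases hcase with h1 | ⟨G, hGΔ, hGF, hG⟩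
  · simp [h1] at h2
  · have hns : ¬ F ⊆ G := fun hsub => hGF ((hΔ.2 F hFΔ G hGΔ hsub).symm)
    obtain ⟨v, hvF, hvG⟩ := Finset.not_subset.mp hns
    refine ⟨v, hvF, fun F' hF'Δ hF'F hvF' => ?_⟩
    exact hvG (Finset.mem_inter.mp (hG F' hF'Δ hF'F (Finset.mem_inter.mpr ⟨hvF, hvF'⟩))).2
end

section
/- Let Δ be a tree on a finite vertex set V and let W ⊆ V. Let Δ' be the simplicial complex whose facets are the maximal elements (under inclusion) of the collection {F ∩ W : F a facet of Δ, F ∩ W ≠ ∅}. Then Δ' is a forest. In particular, the simplicial complex obtained from a tree by removing a single vertex from all of its facets is a forest. -/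
attribute [local instance] Classical.propDecidable

/-- The restriction of `Δ` to a vertex set `W`: the facets are the maximal elements
(under inclusion) of the nonempty intersections `F ∩ W`, for `F` a facet of `Δ`. -/
noncomputable def restrictComplex {V : Type*} [DecidableEq V] (Δ : Finset (Finset V)) (W : Finset V) :
    Finset (Finset V) :=
  ((Δ.image (· ∩ W)).filter (·.Nonempty)).filter
    (fun S => ∀ T ∈ (Δ.image (· ∩ W)).filter (·.Nonempty), S ⊆ T → S = T)

lemma restrict_isForest {V : Type*} [DecidableEq V] (Δ : Finset (Finset V))
    (hF : IsForest Δ) (W : Finset V) : IsForest (restrictComplex Δ W) := by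
  intro Γ hΓ hne
  have hmem : ∀ S ∈ Γ, ∃ F ∈ Δ, F ∩ W = S := by
    intro S hS
    have h := hΓ hS
    simp only [restrictComplex, Finset.mem_filter, Finset.mem_image] at h
    obtain ⟨⟨⟨F, hFΔ, hFW⟩, _⟩, _⟩ := h
    exact ⟨F, hFΔ, hFW⟩
  set f : Finset V → Finset V := fun S =>
    if h : ∃ F ∈ Δ, F ∩ W = S then h.choose else ∅ with hf
  have hfΔ : ∀ S ∈ Γ, f S ∈ Δ := by
    intro S hS
    have h := hmem S hS
    simp only [hf, dif_pos h]
    exact h.choose_spec.1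
  have hfW : ∀ S ∈ Γ, f S ∩ W = S := by
    intro S hS
    have h := hmem S hS
    simp only [hf, dif_pos h]
    exact h.choose_spec.2
  set Γ' := Γ.image f with hΓ'
  have hsub : Γ' ⊆ Δ := by
    intro F hFm
    obtain ⟨S, hS, rfl⟩ := Finset.mem_image.mp hFm
    exact hfΔ S hS
  obtain ⟨F₀, hF₀Γ', hleaf⟩ := hF Γ' hsub (hne.image f)
  obtain ⟨S₀, hS₀Γ, hfS₀⟩ := Finset.mem_image.mp hF₀Γ'
  refine ⟨S₀, hS₀Γ, ?_⟩
  rcases hleaf with hsing | ⟨G, hGΓ', hGne, hGmax⟩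
  · left
    apply Finset.eq_singleton_iff_nonempty_unique_mem.mpr
    refine ⟨⟨S₀, hS₀Γ⟩, fun S hS => ?_⟩
    have : f S = F₀ := by
      have h2 : f S ∈ Γ' := Finset.mem_image_of_mem f hS
      rw [hsing] at h2
      simpa using h2
    calc S = f S ∩ W := (hfW S hS).symm
      _ = F₀ ∩ W := by rw [this]
      _ = f S₀ ∩ W := by rw [hfS₀]
      _ = S₀ := hfW S₀ hS₀Γ
  · right
    obtain ⟨T, hTΓ, hfT⟩ := Finset.mem_image.mp hGΓ'
    have hTne : T ≠ S₀ := by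
      rintro rfl
      exact hGne (hfT ▸ hfS₀ ▸ rfl)
    refine ⟨T, hTΓ, hTne, fun S' hS' hS'ne x hx => ?_⟩
    obtain ⟨hx1, hx2⟩ := Finset.mem_inter.mp hx
    have hxF₀ : x ∈ f S₀ ∧ x ∈ W := by
      have := (hfW S₀ hS₀Γ) ▸ hx1
      exact Finset.mem_inter.mp this
    have hxS' : x ∈ f S' := by
      have := (hfW S' hS') ▸ hx2
      exact (Finset.mem_inter.mp this).1
    have hfS'ne : f S' ≠ F₀ := by
      intro h
      apply hS'ne
      calc S' = f S' ∩ W := (hfW S' hS').symm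
        _ = f S₀ ∩ W := by rw [h, hfS₀]
        _ = S₀ := hfW S₀ hS₀Γ
    have hsub2 := hGmax (f S') (Finset.mem_image_of_mem f hS') hfS'ne
    have hxG : x ∈ G := by
      have : x ∈ F₀ ∩ f S' := Finset.mem_inter.mpr ⟨hfS₀ ▸ hxF₀.1, hxS'⟩
      exact (Finset.mem_inter.mp (hsub2 this)).2
    refine Finset.mem_inter.mpr ⟨hx1, ?_⟩
    rw [← hfW T hTΓ]
    exact Finset.mem_inter.mpr ⟨hfT ▸ hxG, hxF₀.2⟩

/-- **Localization of a tree is a forest**: restricting a tree to any subset `W` of its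
vertex set yields a forest; in particular, removing a single vertex from all facets
of a tree yields a forest. -/
theorem restrict_tree_isForest {V : Type*} [DecidableEq V] (Δ : Finset (Finset V))
    (hΔ : IsFacetFamily Δ) (hT : IsTree Δ) :
    (∀ W : Finset V, IsForest (restrictComplex Δ W)) ∧
      ∀ v : V, IsForest (restrictComplex Δ ((Δ.sup id).erase v)) := by
  exact ⟨fun W => restrict_isForest Δ hT.2 W,
    fun v => restrict_isForest Δ hT.2 _⟩
end

section
/- Let Δ = ⟨F_1,…,F_q⟩ be a tree with q ≥ 2 facets, and suppose F_q is a leaf of Δ. Let F' = F_q ∩ (F_1 ∪ ⋯ ∪ F_{q−1}), and let Δ'' be the simplicial complex whose facets are the maximal elements under inclusion of the collection {F_1,…,F_{q−1}, F'} (with F' omitted if it is empty). Then Δ'' is a forest with at most q − 1 facets. -/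
attribute [local instance] Classical.propDecidable

/-- Removing a leaf `F` from `Δ` and adding back its intersection `F'` with the union of
the remaining facets: the facet set consists of the maximal elements, under inclusion,
of the collection of remaining facets together with `F'` (discarding it if empty). -/
noncomputable def collapseLeaf {V : Type*} [DecidableEq V] (Δ : Finset (Finset V)) (F : Finset V) :
    Finset (Finset V) :=
  (((Δ.erase F) ∪ {F ∩ (Δ.erase F).sup id}).filter (·.Nonempty)).filter
    (fun S => ∀ T ∈ ((Δ.erase F) ∪ {F ∩ (Δ.erase F).sup id}).filter (·.Nonempty),
      S ⊆ T → S = T)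

/-- If `Δ` is a tree with `q ≥ 2` facets and `F` is a leaf, then the complex obtained by
replacing `F` by its intersection with the union of the other facets is a forest with
at most `q - 1` facets. -/
theorem collapseLeaf_isForest {V : Type*} [DecidableEq V] (Δ : Finset (Finset V))
    (hΔ : IsFacetFamily Δ) (hT : IsTree Δ) (h2 : 2 ≤ Δ.card)
    (F : Finset V) (hF : IsLeaf Δ F) :
    IsForest (collapseLeaf Δ F) ∧ (collapseLeaf Δ F).card ≤ Δ.card - 1 := by
  obtain ⟨hFΔ, hleaf⟩ := hF
  -- get the leaf witness G
  have hne : Δ ≠ {F} := by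
    intro h; rw [h] at h2; simp at h2
  obtain ⟨G, hGΔ, hGF, hG⟩ := hleaf.resolve_left hne
  set F' : Finset V := F ∩ (Δ.erase F).sup id with hF'def
  -- F' ⊆ F ∩ G
  have hF'G : F' ⊆ F ∩ G := by
    intro x hx
    rw [hF'def, Finset.mem_inter] at hx
    obtain ⟨hxF, hxsup⟩ := hx
    rw [Finset.mem_sup] at hxsup
    obtain ⟨H, hH, hxH⟩ := hxsup
    have hHΔ := Finset.mem_of_mem_erase hH
    have hHF := Finset.ne_of_mem_erase hH
    exact hG H hHΔ hHF (Finset.mem_inter.mpr ⟨hxF, hxH⟩)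
  have hGerase : G ∈ Δ.erase F := Finset.mem_erase.mpr ⟨hGF, hGΔ⟩
  -- F' ≠ G
  have hF'neG : F' ≠ G := by
    intro h
    have : G ⊆ F := h ▸ Finset.inter_subset_left
    exact hGF (hΔ.2 G hGΔ F hFΔ this)
  -- the key equality
  have key : collapseLeaf Δ F = Δ.erase F := by
    ext X
    unfold collapseLeaf
    simp only [Finset.mem_filter]
    constructor
    · rintro ⟨⟨hXmem, hXne⟩, hXmax⟩
      rcases Finset.mem_union.mp hXmem with h | h
      · exact h
      · exfalso
        have hXF' : X = F' := by simpa using h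
        have := hXmax G ⟨Finset.mem_union_left _ hGerase, hΔ.1 G hGΔ⟩ (hXF' ▸ hF'G.trans Finset.inter_subset_right)
        exact hF'neG (hXF' ▸ this)
    · intro hX
      have hXΔ := Finset.mem_of_mem_erase hX
      have hXF := Finset.ne_of_mem_erase hX
      refine ⟨⟨Finset.mem_union_left _ hX, hΔ.1 X hXΔ⟩, ?_⟩
      intro T hT hXT
      rcases Finset.mem_union.mp hT.1 with h | h
      · exact hΔ.2 X hXΔ T (Finset.mem_of_mem_erase h) hXT
      · exfalso
        have hTF' : T = F' := by simpa using h
        have : X ⊆ F := hXT.trans (hTF' ▸ Finset.inter_subset_left)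
        exact hXF (hΔ.2 X hXΔ F hFΔ this)
  rw [key]
  constructor
  · intro Γ hΓ hΓne
    exact hT.2 Γ (hΓ.trans (Finset.erase_subset F Δ)) hΓne
  · rw [Finset.card_erase_of_mem hFΔ]
end
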